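/- Let F be a finitely generated free group, let φ : F → F be an injective group endomorphism, and let H be a finite-index subgroup of F with φ(H) ⊆ H. Then Λ(φ) ⊆ Λ(φ|_H), i.e., every nonzero eigenvalue of φ is a nonzero eigenvalue of the restriction of φ to H. -/

import Mathlib

open scoped TensorProduct

/-- The complex linear endomorphism of `(G/[G,G]) ⊗_ℤ ℂ` induced by a group
endomorphism `φ : G →* G`. -/
noncomputable def inducedEnd {G : Type*} [Group G] (φ : G →* G) :
    Module.End ℂ (ℂ ⊗[ℤ] Additive (Abelianization G)) :=
  ((MonoidHom.toAdditive (Abelianization.map φ)).toIntLinearMap).baseChange ℂ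

/-- `Λ(φ)`: the set of nonzero eigenvalues of the induced map on
`(G/[G,G]) ⊗_ℤ ℂ`. -/
noncomputable def specNZ {G : Type*} [Group G] (φ : G →* G) : Set ℂ :=
  {μ : ℂ | μ ≠ 0 ∧ Module.End.HasEigenvalue (inducedEnd φ) μ}

/-- The restriction of an endomorphism `φ` to a `φ`-invariant subgroup `H`,
as an endomorphism of `H`. -/
def restrictHom {G : Type*} [Group G] (φ : G →* G) (H : Subgroup G)
    (hinv : ∀ x ∈ H, φ x ∈ H) : H →* H :=
  (φ.domRestrict H).codRestrict H fun x => hinv x x.2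

/-!
The inclusion `H → F` induces a `ℂ`-linear map `p : H^ab ⊗ ℂ → F^ab ⊗ ℂ` intertwining `φ|_H` with
`φ`. It is surjective because some power of every element of `F` lies in `H`, and `H^ab ⊗ ℂ` is
finite-dimensional because `H` is finitely generated. If `φ|_H - μ` were invertible, then so would
be `φ - μ` on the quotient `F^ab ⊗ ℂ`; hence every eigenvalue of `φ` is one of `φ|_H`.
-/

open Function TensorProduct

theorem Module.End.hasEigenvalue_of_surjective_comp_eq {K M N : Type*} [Field K]
    [AddCommGroup M] [Module K M] [AddCommGroup N] [Module K N] [FiniteDimensional K M]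
    {p : M →ₗ[K] N} (hp : Surjective p) {f : Module.End K M} {g : Module.End K N}
    (hpf : p ∘ₗ f = g ∘ₗ p) {μ : K} (hg : g.HasEigenvalue μ) : f.HasEigenvalue μ := by
  have : FiniteDimensional K N := Module.Finite.of_surjective p hp
  have hshift : p ∘ₗ (f - μ • 1) = (g - μ • 1) ∘ₗ p := by
    rw [LinearMap.comp_sub, LinearMap.sub_comp, hpf, LinearMap.comp_smul, LinearMap.smul_comp,
      Module.End.one_eq_id, LinearMap.comp_id, Module.End.one_eq_id, LinearMap.id_comp]
  rw [Module.End.hasEigenvalue_iff, Module.End.eigenspace_def] at hg ⊢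
  contrapose! hg
  rw [LinearMap.ker_eq_bot_iff_range_eq_top] at hg ⊢
  -- `range (g - μ) ⊇ p (range (f - μ)) = p ⊤ = ⊤`
  rw [eq_top_iff, ← LinearMap.range_eq_top.mpr hp, ← Submodule.map_top, ← hg,
    ← LinearMap.range_comp, hshift, LinearMap.range_comp]
  exact LinearMap.map_le_range

theorem AddMonoidHom.baseChange_surjective_of_exists_zsmul_mem_range {K A B : Type*} [Field K]
    [CharZero K] [AddCommGroup A] [AddCommGroup B] (f : A →+ B)
    (hf : ∀ b : B, ∃ n : ℤ, n ≠ 0 ∧ n • b ∈ f.range) :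
    Surjective (f.toIntLinearMap.baseChange K) := by
  rw [← LinearMap.range_eq_top, Submodule.eq_top_iff']
  intro t
  induction t using TensorProduct.induction_on with
  | zero => exact zero_mem _
  | add x y hx hy => exact add_mem hx hy
  | tmul c b =>
    -- `c ⊗ b = (c / n) ⊗ (n • b)`
    obtain ⟨n, hn, a, ha⟩ := hf b
    refine ⟨(c / n) ⊗ₜ a, ?_⟩
    rw [LinearMap.baseChange_tmul, AddMonoidHom.coe_toIntLinearMap, ha, ← smul_tmul,
      zsmul_eq_mul, mul_div_cancel₀ c (Int.cast_ne_zero.mpr hn)]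

theorem Abelianization.exists_pow_mem_range_map_subtype {G : Type*} [Group G]
    (H : Subgroup G) [H.FiniteIndex] (x : Abelianization G) :
    ∃ n : ℕ, n ≠ 0 ∧ x ^ n ∈ (Abelianization.map H.subtype).range := by
  induction x using QuotientGroup.induction_on with
  | H g =>
    obtain ⟨n, hn, -, hgn⟩ := Subgroup.exists_pow_mem_of_index_ne_zero H.index_ne_zero_of_finite g
    exact ⟨n, hn.ne', Abelianization.of ⟨g ^ n, hgn⟩,
      (Abelianization.map_of _ _).trans (map_pow Abelianization.of g n)⟩

instance Abelianization.instModuleFiniteIntAdditive {G : Type*} [Group G] [Group.FG G] :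
    Module.Finite ℤ (Additive (Abelianization G)) :=
  have : Group.FG (Abelianization G) := QuotientGroup.fg _
  Module.Finite.iff_addGroup_fg.mpr inferInstance

noncomputable def Abelianization.baseChangeMap (K : Type*) [CommRing K] {G G' : Type*} [Group G]
    [Group G'] (f : G →* G') :
    K ⊗[ℤ] Additive (Abelianization G) →ₗ[K] K ⊗[ℤ] Additive (Abelianization G') :=
  (MonoidHom.toAdditive (Abelianization.map f)).toIntLinearMap.baseChange K

theorem Abelianization.baseChangeMap_comp (K : Type*) [CommRing K] {G G' G'' : Type*} [Group G]
    [Group G'] [Group G''] (f : G →* G') (g : G' →* G'') :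
    baseChangeMap K (g.comp f) = baseChangeMap K g ∘ₗ baseChangeMap K f := by
  rw [baseChangeMap, baseChangeMap, baseChangeMap, ← LinearMap.baseChange_comp, ← map_comp]
  rfl

theorem eigenvalues_subset_of_finiteIndex_invariant_of_injective_general
    {F : Type*} [Group F] [Group.FG F]
    (φ : F →* F) (H : Subgroup F) [H.FiniteIndex]
    (hinv : ∀ x ∈ H, φ x ∈ H) :
    specNZ φ ⊆ specNZ (restrictHom φ H hinv) := by
  have : Group.FG H := Subgroup.fg_of_index_ne_zero H
  have hsurj : Surjective (Abelianization.baseChangeMap ℂ H.subtype) := by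
    refine AddMonoidHom.baseChange_surjective_of_exists_zsmul_mem_range _ fun x => ?_
    obtain ⟨n, hn, y, hy⟩ := Abelianization.exists_pow_mem_range_map_subtype H x.toMul
    exact ⟨n, Int.natCast_ne_zero.mpr hn, Additive.ofMul y, by simp [hy]⟩
  have hcomm : Abelianization.baseChangeMap ℂ H.subtype ∘ₗ inducedEnd (restrictHom φ H hinv) =
      inducedEnd φ ∘ₗ Abelianization.baseChangeMap ℂ H.subtype :=
    (Abelianization.baseChangeMap_comp ℂ _ H.subtype).symm.trans
      (Abelianization.baseChangeMap_comp ℂ H.subtype φ)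
  rintro μ ⟨hμ, hφμ⟩
  exact ⟨hμ, Module.End.hasEigenvalue_of_surjective_comp_eq hsurj hcomm hφμ⟩

theorem eigenvalues_subset_of_finiteIndex_invariant_of_injective
    {F : Type*} [Group F] [IsFreeGroup F] [Group.FG F]
    (φ : F →* F) (H : Subgroup F) [H.FiniteIndex]
    (hinv : ∀ x ∈ H, φ x ∈ H) :
    specNZ φ ⊆ specNZ (restrictHom φ H hinv) :=
  eigenvalues_subset_of_finiteIndex_invariant_of_injective_general φ H hinv
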